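/- arXiv:1708.03306 — 12 statements merged into one kernel-verified Lean document; each statement's English description precedes it below -/
import Mathlib

section
/- In a semihoop (integral commutative prelinear residuated lattice), the binary operation defined by x ⊓ y := (x * (x → y)) ∨ (y * (y → x)) is the infimum of x and y. -/
/-- A semihoop: a commutative monoid with a join-semilattice order having
top element `1`, a residual `himp` satisfying residuation, and prelinearity. -/
class Semihoop (α : Type*) extends CommMonoid α, SemilatticeSup α, OrderTop α where
  himp : α → α → α
  residuation : ∀ x y z : α, x * y ≤ z ↔ x ≤ himp y z
  one_eq_top : (1 : α) = ⊤
  prelinear : ∀ x y : α, himp x y ⊔ himp y x = 1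

namespace SemihoopAux

variable {α : Type*} [Semihoop α]

lemma mul_le_mul_right' {a b : α} (h : a ≤ b) (c : α) : a * c ≤ b * c := by
  rw [Semihoop.residuation]
  exact le_trans h ((Semihoop.residuation b c (b * c)).mp le_rfl)

lemma mul_le_left' (a b : α) : a * b ≤ a := by
  have h : a * b ≤ a * 1 := by
    rw [mul_comm a b, mul_comm a 1]
    exact mul_le_mul_right' (by rw [Semihoop.one_eq_top]; exact le_top) a
  simpa using h

lemma mul_himp_le (a b : α) : a * Semihoop.himp a b ≤ b := by
  rw [mul_comm, Semihoop.residuation]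

lemma mul_sup_le (a b c : α) : a * (b ⊔ c) ≤ a * b ⊔ a * c := by
  rw [mul_comm, Semihoop.residuation]
  refine sup_le ?_ ?_ <;> rw [← Semihoop.residuation]
  · rw [mul_comm]; exact le_sup_left
  · rw [mul_comm]; exact le_sup_right

end SemihoopAux

open SemihoopAux in
/-- In a semihoop, `(x * (x → y)) ⊔ (y * (y → x))` is the infimum of `x` and `y`. -/
theorem semihoop_inf_def {α : Type*} [Semihoop α] (x y : α) :
    IsGLB {x, y} ((x * Semihoop.himp x y) ⊔ (y * Semihoop.himp y x)) := by
  constructor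
  · rintro z (rfl | rfl)
    · exact sup_le (mul_le_left' _ _) (mul_himp_le _ _)
    · exact sup_le (mul_himp_le _ _) (mul_le_left' _ _)
  · rintro z hz
    have hx : z ≤ x := hz (by simp)
    have hy : z ≤ y := hz (by simp [Set.mem_insert_iff])
    have h1 : z = z * (Semihoop.himp x y ⊔ Semihoop.himp y x) := by
      rw [Semihoop.prelinear, mul_one]
    calc z = z * (Semihoop.himp x y ⊔ Semihoop.himp y x) := h1
      _ ≤ z * Semihoop.himp x y ⊔ z * Semihoop.himp y x := mul_sup_le _ _ _
      _ ≤ x * Semihoop.himp x y ⊔ y * Semihoop.himp y x :=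
          sup_le_sup (mul_le_mul_right' hx _) (mul_le_mul_right' hy _)
end

section
/- A finite MTL-chain M is archimedean if and only if M is the two-element chain or M has no nontrivial idempotent elements (i.e., no x with x² = x and x ≠ 0, x ≠ 1). -/
/-- An MTL-algebra: a bounded integral commutative prelinear residuated lattice.
The top element coincides with the monoid unit `1` (integrality), `⊥` plays the
role of `0`, `himp` is the residual `→`. -/
class MTL (α : Type*) extends CommMonoid α, Lattice α, BoundedOrder α where
  himp : α → α → α
  residuation : ∀ x y z : α, x * y ≤ z ↔ x ≤ himp y z
  one_eq_top : (1 : α) = ⊤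
  prelinear : ∀ x y : α, himp x y ⊔ himp y x = 1

/-- An MTL-algebra is archimedean if for all `x ≤ y < 1` there is `n` with `y ^ n ≤ x`. -/
def IsArchimedean (α : Type*) [MTL α] : Prop :=
  ∀ x y : α, x ≤ y → y < 1 → ∃ n : ℕ, y ^ n ≤ x

/-- A homomorphism of MTL-algebras: preserves `·`, `→`, `∧`, `∨`, `0` (= `⊥`) and `1`. -/
def IsMTLHom {α β : Type*} [MTL α] [MTL β] (f : α → β) : Prop :=
  (∀ x y, f (x * y) = f x * f y) ∧
  (∀ x y, f (MTL.himp x y) = MTL.himp (f x) (f y)) ∧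
  (∀ x y, f (x ⊓ y) = f x ⊓ f y) ∧
  (∀ x y, f (x ⊔ y) = f x ⊔ f y) ∧
  f ⊥ = ⊥ ∧ f 1 = 1

section Helpers
variable {α : Type*} [MTL α]

lemma MTL.le_one'' (a : α) : a ≤ 1 := MTL.one_eq_top (α := α) ▸ le_top

lemma MTL.mul_le_mul_right'' {a b : α} (h : a ≤ b) (c : α) : a * c ≤ b * c :=
  (MTL.residuation a c (b * c)).mpr (h.trans ((MTL.residuation b c (b * c)).mp le_rfl))

lemma MTL.pow_anti (y : α) : ∀ {m n : ℕ}, m ≤ n → y ^ n ≤ y ^ m := by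
  intro m n h
  induction n with
  | zero => simp_all
  | succ k ih =>
    rcases Nat.lt_or_ge m (k + 1) with h' | h'
    · have hs : y ^ (k + 1) ≤ y ^ k := by
        rw [pow_succ, mul_comm]
        calc y * y ^ k ≤ 1 * y ^ k := MTL.mul_le_mul_right'' (MTL.le_one'' y) _
          _ = y ^ k := one_mul _
      exact hs.trans (ih (Nat.lt_succ_iff.mp h'))
    · have : m = k + 1 := le_antisymm h h'
      subst this; exact le_rfl

end Helpers

/-- A finite MTL-chain is archimedean iff it is the two-element chain or it has
no nontrivial idempotent elements. -/
theorem finite_mtl_chain_archimedean_iff {α : Type*} [MTL α] [Fintype α]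
    (htot : ∀ x y : α, x ≤ y ∨ y ≤ x) :
    IsArchimedean α ↔
      (Fintype.card α = 2 ∨ ∀ x : α, x * x = x → x = ⊥ ∨ x = 1) := by
  constructor
  · intro harch
    right
    intro x hx
    by_cases hx1 : x = 1
    · right; exact hx1
    · left
      have hxlt : x < 1 := lt_of_le_of_ne (MTL.le_one'' x) hx1
      obtain ⟨n, hn⟩ := harch ⊥ x bot_le hxlt
      cases n with
      | zero =>
        have h1 : (1 : α) ≤ ⊥ := by simpa using hn
        exact le_antisymm ((MTL.le_one'' x).trans h1) bot_le
      | succ k =>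
        have hxk : ∀ m : ℕ, x ^ (m + 1) = x := by
          intro m; induction m with
          | zero => simp
          | succ j ih => rw [pow_succ, ih, hx]
        rw [hxk k] at hn
        exact le_antisymm hn bot_le
  · intro h
    have hno : ∀ x : α, x * x = x → x = ⊥ ∨ x = 1 := by
      rcases h with h2 | h
      · intro x _
        by_contra hcon
        push_neg at hcon
        obtain ⟨hxb, hx1⟩ := hcon
        have hb1 : (⊥ : α) ≠ 1 := by
          intro hb
          exact hxb (le_antisymm (hb ▸ MTL.le_one'' x) bot_le)
        classical
        have hcard : ({⊥, x, 1} : Finset α).card = 3 := by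
          rw [Finset.card_insert_of_notMem (by simp [hb1, Ne.symm hxb]),
            Finset.card_insert_of_notMem (by simp [hx1]), Finset.card_singleton]
        have hle : ({⊥, x, 1} : Finset α).card ≤ Fintype.card α :=
          Finset.card_le_univ _
        omega
      · exact h
    intro x y hxy hy1
    obtain ⟨i, j, hij, heq'⟩ := Finite.exists_ne_map_eq_of_infinite (fun n : ℕ => y ^ n)
    have heq : y ^ i = y ^ j := heq'
    have key : ∃ n : ℕ, y ^ (n + 1) = y ^ n := by
      rcases hij.lt_or_gt with hlt | hlt
      · exact ⟨i, le_antisymm (MTL.pow_anti y (Nat.le_succ i))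
          (heq ▸ MTL.pow_anti y hlt)⟩
      · exact ⟨j, le_antisymm (MTL.pow_anti y (Nat.le_succ j))
          (heq ▸ MTL.pow_anti y hlt)⟩
    obtain ⟨n, hn⟩ := key
    have hn0 : n ≠ 0 := by
      intro h0
      subst h0
      simp at hn
      exact hy1.ne hn
    have hstab : ∀ m : ℕ, y ^ (n + m) = y ^ n := by
      intro m; induction m with
      | zero => rfl
      | succ j ih => rw [← Nat.add_assoc, pow_succ, ih, ← pow_succ, hn]
    have hidem : y ^ n * y ^ n = y ^ n := by
      rw [← pow_add, hstab n]
    have hle : y ^ n ≤ y := by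
      have := MTL.pow_anti y (Nat.one_le_iff_ne_zero.mpr hn0)
      simpa using this
    have hne1 : y ^ n ≠ 1 := fun h1 => absurd (h1 ▸ hle : (1:α) ≤ y) (not_le_of_gt hy1)
    rcases hno (y ^ n) hidem with hb | h1
    · exact ⟨n, by rw [hb]; exact bot_le⟩
    · exact absurd h1 hne1
end

section
/- A finite MTL-chain M is archimedean if and only if for all a, b ∈ M, ((a → b) → b)² ≤ a ∨ b. -/
section MTLFacts

variable {α : Type*} [MTL α]

lemma mtl_le_one (x : α) : x ≤ 1 := by rw [MTL.one_eq_top]; exact le_top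

lemma mtl_mul_le_mul_right {x y : α} (h : x ≤ y) (z : α) : x * z ≤ y * z := by
  have hy : y ≤ MTL.himp z (y * z) := (MTL.residuation y z (y * z)).1 le_rfl
  exact (MTL.residuation x z (y * z)).2 (le_trans h hy)

lemma mtl_mul_le_left (x y : α) : x * y ≤ x := by
  have h := mtl_mul_le_mul_right (mtl_le_one y) x
  rwa [mul_comm y x, one_mul] at h

lemma mtl_pow_le_pow (y : α) {m n : ℕ} (h : m ≤ n) : y ^ n ≤ y ^ m := by
  obtain ⟨j, rfl⟩ := Nat.exists_eq_add_of_le h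
  rw [pow_add]; exact mtl_mul_le_left _ _

lemma mtl_one_himp (b : α) : MTL.himp 1 b = b := by
  refine le_antisymm ?_ ((MTL.residuation b 1 b).1 (by rw [mul_one]))
  have h := (MTL.residuation (MTL.himp 1 b) 1 b).2 le_rfl
  rwa [mul_one] at h

lemma mtl_himp_eq_one {a b : α} (h : a ≤ b) : MTL.himp a b = 1 :=
  le_antisymm (mtl_le_one _) ((MTL.residuation 1 a b).1 (by rwa [one_mul]))

end MTLFacts

/-- A finite MTL-chain is archimedean iff `((a → b) → b)² ≤ a ∨ b` for all `a b`. -/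
theorem finite_mtl_chain_archimedean_iff_eq {α : Type*} [MTL α] [Fintype α]
    (htot : ∀ x y : α, x ≤ y ∨ y ≤ x) :
    IsArchimedean α ↔
      ∀ a b : α, (MTL.himp (MTL.himp a b) b) ^ 2 ≤ a ⊔ b := by
  classical
  constructor
  · -- archimedean ⇒ identity
    intro h a b
    rcases htot a b with hab | hba
    · rw [mtl_himp_eq_one hab, mtl_one_himp, pow_two]
      exact le_trans (mtl_mul_le_left b b) le_sup_right
    · set d := MTL.himp a b with hd_def
      set c := MTL.himp d b with hc_def
      refine le_trans ?_ (le_sup_left : a ≤ a ⊔ b)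
      rw [pow_two]
      by_contra hne
      have hac2 : a ≤ c * c := (htot a (c * c)).resolve_right hne
      have ha1 : ¬ (1 : α) ≤ a := fun hh => hne (le_trans (mtl_le_one _) hh)
      have hb1 : ¬ (1 : α) ≤ b := fun hh => ha1 (le_trans hh hba)
      have hmp : d * a ≤ b := (MTL.residuation d a b).2 le_rfl
      have hac : a ≤ c := (MTL.residuation a d b).1 (by rw [mul_comm]; exact hmp)
      have hcd : c * d ≤ b := (MTL.residuation c d b).2 le_rfl
      by_cases hc1 : (1 : α) ≤ c
      · -- c = 1, so d ≤ b
        have hdb : d ≤ b := by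
          have h1 : (1 : α) * d ≤ c * d := mtl_mul_le_mul_right hc1 d
          rw [one_mul] at h1
          exact le_trans h1 hcd
        have halt : a < 1 := lt_of_le_of_ne (mtl_le_one a) (fun hh => ha1 (le_of_eq hh.symm))
        obtain ⟨m0, hm0⟩ := h b a hba halt
        have hex : ∃ m, a ^ m ≤ b := ⟨m0, hm0⟩
        have hm := Nat.find_spec hex
        rcases Nat.eq_zero_or_pos (Nat.find hex) with h0 | hpos
        · rw [h0, pow_zero] at hm; exact hb1 hm
        · obtain ⟨j, hj⟩ := Nat.exists_eq_succ_of_ne_zero (Nat.pos_iff_ne_zero.1 hpos)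
          have hj1 : a ^ j * a ≤ b := by
            have hm' := hm
            rw [hj] at hm'
            rw [← pow_succ]
            exact hm'
          have hj2 : a ^ j ≤ d := (MTL.residuation (a ^ j) a b).1 hj1
          exact Nat.find_min hex (by omega : j < Nat.find hex) (le_trans hj2 hdb)
      · -- c < 1
        have hclt : c < 1 := lt_of_le_of_ne (mtl_le_one c) (fun hh => hc1 (le_of_eq hh.symm))
        have hbc : b ≤ c := le_trans hba hac
        obtain ⟨n0, hn0⟩ := h b c hbc hclt
        have hex : ∃ n, c ^ n ≤ b := ⟨n0, hn0⟩
        have hn := Nat.find_spec hex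
        match hN : Nat.find hex, hn with
        | 0, hn => rw [pow_zero] at hn; exact hb1 hn
        | 1, hn =>
          rw [pow_one] at hn
          exact hne (le_trans (mtl_mul_le_left c c) (le_trans hn hba))
        | 2, hn =>
          rw [pow_two] at hn
          exact hne (le_trans hn hba)
        | (k+3), hn =>
          have h1 : a * c ^ (k+1) ≤ b := by
            have h2 : a * c ^ (k+1) ≤ (c * c) * c ^ (k+1) :=
              mtl_mul_le_mul_right hac2 _
            have h3 : (c * c) * c ^ (k+1) = c ^ (k+3) := by
              rw [← pow_two, ← pow_add, show 2 + (k+1) = k+3 from by omega]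
            rw [h3] at h2
            exact le_trans h2 hn
          have h2 : c ^ (k+1) ≤ d :=
            (MTL.residuation (c ^ (k+1)) a b).1 (by rw [mul_comm]; exact h1)
          have h3 : c ^ (k+2) ≤ b := by
            have h4 : c ^ (k+2) = c ^ (k+1) * c := by rw [← pow_succ]
            rw [h4]
            have h5 : c ^ (k+1) * c ≤ d * c := mtl_mul_le_mul_right h2 c
            rw [mul_comm d c] at h5
            exact le_trans h5 hcd
          have := Nat.find_min hex (by omega : k + 2 < Nat.find hex)
          exact this h3
  · -- identity ⇒ archimedean
    intro h x y hxy hy1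
    -- find a repetition among powers of y
    obtain ⟨k, l, hkl, hpw⟩ : ∃ k l : ℕ, k < l ∧ y ^ k = y ^ l := by
      obtain ⟨k, l, hne, heq⟩ :=
        Finite.exists_ne_map_eq_of_infinite (fun n : ℕ => y ^ n)
      rcases lt_or_gt_of_ne hne with h' | h'
      · exact ⟨k, l, h', heq⟩
      · exact ⟨l, k, h', heq.symm⟩
    obtain ⟨p, hp, hlk⟩ : ∃ p : ℕ, 0 < p ∧ l = k + p := ⟨l - k, by omega, by omega⟩
    have hpow : y ^ k = y ^ (k + p) := by rw [← hlk]; exact hpw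
    -- k ≥ 1
    rcases Nat.eq_zero_or_pos k with hk0 | hk1
    · exfalso
      have h1 : (1 : α) = y ^ (k + p) := by rw [← hpow, hk0, pow_zero]
      have h2 : y ^ (k + p) ≤ y ^ 1 := mtl_pow_le_pow y (by omega)
      rw [pow_one] at h2
      exact absurd (h1 ▸ h2) (not_le_of_gt hy1)
    · have key1 : ∀ m : ℕ, y ^ (k + m + p) = y ^ (k + m) := by
        intro m
        have e1 : k + m + p = (k + p) + m := by omega
        rw [e1, pow_add, ← hpow, ← pow_add]
      have key2 : ∀ t m : ℕ, y ^ (k + m + t * p) = y ^ (k + m) := by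
        intro t
        induction t with
        | zero => intro m; simp
        | succ t ih =>
          intro m
          have e2 : k + m + (t+1) * p = k + (m + t * p) + p := by ring
          rw [e2, key1 (m + t * p)]
          have e3 : k + (m + t * p) = k + m + t * p := by ring
          rw [e3, ih m]
      obtain ⟨q, rfl⟩ : ∃ q, p = q + 1 := ⟨p - 1, by omega⟩
      set N := k * (q + 1) with hN_def
      have hidem : y ^ N * y ^ N = y ^ N := by
        rw [← pow_add]
        have e3 : N + N = k + k * q + k * (q + 1) := by rw [hN_def]; ring
        rw [e3, key2 k (k * q)]
        have e4 : k + k * q = N := by rw [hN_def]; ring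
        rw [e4]
      have hNlt : y ^ N < 1 := by
        have h1 : y ^ N ≤ y ^ 1 := mtl_pow_le_pow y (Nat.mul_pos hk1 (Nat.succ_pos q))
        rw [pow_one] at h1
        exact lt_of_le_of_lt h1 hy1
      -- show y ^ N = ⊥ using the identity
      have hbot : y ^ N = ⊥ := by
        by_contra hnb
        set e := y ^ N with he_def
        have hbe : ⊥ < e := bot_lt_iff_ne_bot.2 (fun hh => hnb hh)
        set S : Finset α := Finset.univ.filter (fun z => z < e) with hS_def
        have hSne : S.Nonempty := ⟨⊥, by simp [hS_def, hbe]⟩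
        obtain ⟨p0, hp0S, hp0max⟩ := S.exists_maximal hSne
        have hp0e : p0 < e := by rw [hS_def] at hp0S; simpa using hp0S
        have hmax : ∀ z : α, z < e → z ≤ p0 := by
          intro z hz
          have hzS : z ∈ S := by simp [hS_def, hz]
          have hnlt : ¬ p0 < z := fun hlt' => (not_le_of_gt hlt') (hp0max hzS hlt'.le)
          rcases htot z p0 with h' | h'
          · exact h'
          · rcases eq_or_lt_of_le h' with heq | hlt
            · exact le_of_eq heq.symm
            · exact absurd hlt hnlt
        -- himp e p0 = p0
        have hle1 : p0 ≤ MTL.himp e p0 :=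
          (MTL.residuation p0 e p0).1 (mtl_mul_le_left p0 e)
        have hnle : ¬ e ≤ MTL.himp e p0 := by
          intro hle
          have h1 : e * e ≤ p0 := (MTL.residuation e e p0).2 hle
          rw [hidem] at h1
          exact absurd h1 (not_le_of_gt hp0e)
        have hlt : MTL.himp e p0 < e := by
          rcases htot e (MTL.himp e p0) with h' | h'
          · exact absurd h' hnle
          · exact lt_of_le_of_ne h' (fun hh => hnle (le_of_eq hh.symm))
        have heq0 : MTL.himp e p0 = p0 := le_antisymm (hmax _ hlt) hle1
        have hid := h e p0
        rw [heq0, mtl_himp_eq_one (le_refl p0), one_pow] at hid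
        have hsup : e ⊔ p0 = e := sup_eq_left.2 (le_of_lt hp0e)
        rw [hsup] at hid
        exact (not_le_of_gt hNlt) hid
      exact ⟨N, by rw [hbot]; exact bot_le⟩
end

section
/- Let f : A → B be a homomorphism of finite MTL-chains. If A is archimedean, then B is the trivial one-element algebra or f is injective. -/
/-- A homomorphism from a finite archimedean MTL-chain is either into the trivial
algebra or injective. -/
theorem mtl_hom_from_archimedean {α β : Type*} [MTL α] [MTL β]
    [Fintype α] [Fintype β]
    (htotA : ∀ x y : α, x ≤ y ∨ y ≤ x) (htotB : ∀ x y : β, x ≤ y ∨ y ≤ x)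
    (harch : IsArchimedean α)
    (f : α → β) (hf : IsMTLHom f) :
    Subsingleton β ∨ Function.Injective f := by
  obtain ⟨hmul, hhimp, hinf, hsup, hbot, hone⟩ := hf
  have hpow : ∀ (x : α) (n : ℕ), f (x ^ n) = (f x) ^ n := by
    intro x n
    induction n with
    | zero => simpa using hone
    | succ n ih => rw [pow_succ, hmul, ih, pow_succ]
  -- himp x x = 1 in any MTL
  have hrefl : ∀ x : β, MTL.himp x x = (1 : β) := by
    intro x
    refine le_antisymm ?_ ?_
    · rw [MTL.one_eq_top]; exact le_top
    · rw [← MTL.residuation, one_mul]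
  -- key: if a < b and f a = f b then β is trivial
  have key : ∀ a b : α, a < b → f a = f b → Subsingleton β := by
    intro a b hab hfab
    set c := MTL.himp b a with hc
    have hc1 : c < 1 := by
      rcases lt_or_eq_of_le (by rw [MTL.one_eq_top]; exact le_top : c ≤ 1) with h | h
      · exact h
      · exfalso
        have : (1 : α) ≤ MTL.himp b a := h.ge
        rw [← MTL.residuation, one_mul] at this
        exact hab.not_ge this
    obtain ⟨n, hn⟩ := harch ⊥ c bot_le hc1
    have hcbot : c ^ n = ⊥ := le_antisymm hn bot_le
    have hfc : f c = 1 := by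
      rw [hc, hhimp, hfab]; exact hrefl (f b)
    have hb1 : (⊥ : β) = 1 := by
      calc (⊥ : β) = f ⊥ := hbot.symm
        _ = f (c ^ n) := by rw [hcbot]
        _ = (f c) ^ n := hpow c n
        _ = 1 := by rw [hfc, one_pow]
    refine ⟨fun x y => ?_⟩
    have h1 : ∀ z : β, z = ⊥ := fun z =>
      le_antisymm (by rw [hb1, MTL.one_eq_top]; exact le_top) bot_le
    rw [h1 x, h1 y]
  by_cases hinj : Function.Injective f
  · exact Or.inr hinj
  · left
    simp only [Function.Injective, not_forall] at hinj
    obtain ⟨a, b, hfab, hne⟩ := hinj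
    rcases htotA a b with h | h
    · exact key a b (lt_of_le_of_ne h hne) hfab
    · exact key b a (lt_of_le_of_ne h (Ne.symm hne)) hfab.symm
end

section
/- Let f : A → B be a homomorphism of finite MTL-chains with A archimedean and B nontrivial (0 ≠ 1 in B). Then f(x) = 0 implies x = 0. -/
/-- A homomorphism from a finite archimedean MTL-chain to a nontrivial finite
MTL-chain reflects `0`. -/
theorem mtl_hom_from_archimedean_reflects_zero {α β : Type*} [MTL α] [MTL β]
    [Fintype α] [Fintype β]
    (htotA : ∀ x y : α, x ≤ y ∨ y ≤ x) (htotB : ∀ x y : β, x ≤ y ∨ y ≤ x)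
    (harch : IsArchimedean α) (hB : (⊥ : β) ≠ 1)
    (f : α → β) (hf : IsMTLHom f) :
    ∀ x : α, f x = ⊥ → x = ⊥ := by
  intro x hx
  by_contra hxne
  -- the negation of x
  set y : α := MTL.himp x ⊥ with hy
  -- y < 1
  have hylt : y < 1 := by
    rw [lt_iff_le_and_ne]
    constructor
    · rw [MTL.one_eq_top]; exact le_top
    · intro h1
      apply hxne
      have : (1 : α) ≤ MTL.himp x ⊥ := h1.symm.le
      have := (MTL.residuation 1 x ⊥).mpr this
      rw [one_mul] at this
      exact le_antisymm this bot_le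
  obtain ⟨n, hn⟩ := harch ⊥ y bot_le hylt
  have hyn : y ^ n = ⊥ := le_antisymm hn bot_le
  -- f y = 1
  have hfy : f y = 1 := by
    rw [hy, hf.2.1, hx, hf.2.2.2.2.1]
    apply le_antisymm
    · rw [MTL.one_eq_top]; exact le_top
    · exact (MTL.residuation (α := β) 1 ⊥ ⊥).mp (by rw [one_mul])
  -- f preserves powers
  have hpow : ∀ m : ℕ, ∀ a : α, f (a ^ m) = f a ^ m := by
    intro m
    induction m with
    | zero => intro a; simp [hf.2.2.2.2.2]
    | succ k ih => intro a; rw [pow_succ, pow_succ, hf.1, ih]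
  have : (⊥ : β) = 1 := by
    calc (⊥ : β) = f ⊥ := hf.2.2.2.2.1.symm
    _ = f (y ^ n) := by rw [hyn]
    _ = (f y) ^ n := hpow n y
    _ = 1 := by rw [hfy, one_pow]
  exact hB this
end

section
/- Every homomorphism between finite archimedean MTL-chains (both nontrivial) is injective. -/
/-- Every homomorphism between nontrivial finite archimedean MTL-chains is injective. -/
theorem mtl_hom_between_archimedean_injective {α β : Type*} [MTL α] [MTL β]
    [Fintype α] [Fintype β]
    (htotA : ∀ x y : α, x ≤ y ∨ y ≤ x) (htotB : ∀ x y : β, x ≤ y ∨ y ≤ x)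
    (harchA : IsArchimedean α) (harchB : IsArchimedean β)
    (hA : (⊥ : α) ≠ 1) (hB : (⊥ : β) ≠ 1)
    (f : α → β) (hf : IsMTLHom f) :
    Function.Injective f := by
  obtain ⟨hmul, himp, hinf, hsup, hbot, hone⟩ := hf
  have key : ∀ x y : α, x < y → f x = f y → False := by
    intro x y hlt hfeq
    set a := MTL.himp y x with ha
    have haone : f a = 1 := by
      rw [ha, himp, hfeq]
      apply le_antisymm
      · rw [MTL.one_eq_top]; exact le_top
      · rw [← MTL.residuation, one_mul]
    have hane : a ≠ 1 := by
      intro h1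
      have : y ≤ x := by
        have := (MTL.residuation (1 : α) y x).mpr (h1 ▸ le_refl a)
        rwa [one_mul] at this
      exact hlt.not_ge this
    have halt : a < 1 := lt_of_le_of_ne (MTL.one_eq_top (α := α) ▸ le_top) hane
    obtain ⟨n, hn⟩ := harchA ⊥ a bot_le halt
    have hanbot : a ^ n = ⊥ := le_antisymm hn bot_le
    have hpow : ∀ m : ℕ, f (a ^ m) = (f a) ^ m := by
      intro m
      induction m with
      | zero => simpa using hone
      | succ k ih => rw [pow_succ, pow_succ, hmul, ih]
    have hcontra : (⊥ : β) = 1 := by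
      have h1 := hpow n
      rw [hanbot, hbot, haone, one_pow] at h1
      exact h1
    exact hB hcontra
  intro x y hxy
  by_contra hne
  rcases htotA x y with h | h
  · exact key x y (lt_of_le_of_ne h hne) hxy
  · exact key y x (lt_of_le_of_ne h (Ne.symm hne)) hxy.symm
end

section
/- For any MTL-algebra M, the opposite of the prime spectrum Spec(M), ordered by inclusion of prime filters, is a forest: for every prime filter P, the set of prime filters containing P is totally ordered by inclusion. -/
/-- A filter of an MTL-algebra: a submultiplicative upset containing `1`. -/
def IsMTLFilter {α : Type*} [MTL α] (F : Set α) : Prop :=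
  (1 : α) ∈ F ∧ (∀ x y : α, x ∈ F → x ≤ y → y ∈ F) ∧
    (∀ x y : α, x ∈ F → y ∈ F → x * y ∈ F)

/-- A prime filter: a filter not containing `0` (= `⊥`) such that
`x ⊔ y ∈ F` implies `x ∈ F` or `y ∈ F`. -/
def IsPrimeMTLFilter {α : Type*} [MTL α] (F : Set α) : Prop :=
  IsMTLFilter F ∧ (⊥ : α) ∉ F ∧ ∀ x y : α, x ⊔ y ∈ F → x ∈ F ∨ y ∈ F

/-- The opposite of the prime spectrum of an MTL-algebra is a forest:
the prime filters containing a given prime filter form a chain under inclusion. -/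
theorem spec_op_is_forest {α : Type*} [MTL α]
    (P Q R : Set α) (hP : IsPrimeMTLFilter P) (hQ : IsPrimeMTLFilter Q)
    (hR : IsPrimeMTLFilter R) (hPQ : P ⊆ Q) (hPR : P ⊆ R) :
    Q ⊆ R ∨ R ⊆ Q := by
  by_contra h
  push_neg at h
  rw [Set.not_subset, Set.not_subset] at h
  obtain ⟨⟨x, hxQ, hxR⟩, y, hyR, hyQ⟩ := h
  have hone : (1 : α) ∈ P := hP.1.1
  have key : MTL.himp x y ⊔ MTL.himp y x ∈ P := by
    rw [MTL.prelinear]; exact hone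
  have mul_le : ∀ a b : α, MTL.himp a b * a ≤ b := fun a b =>
    (MTL.residuation _ _ _).mpr le_rfl
  rcases hP.2.2 _ _ key with hxy | hyx
  · exact hyQ (hQ.1.2.1 _ _ (hQ.1.2.2 _ _ (hPQ hxy) hxQ) (mul_le x y))
  · exact hxR (hR.1.2.1 _ _ (hR.1.2.2 _ _ (hPR hyx) hyR) (mul_le y x))
end

section
/- Let M be a finite MTL-algebra and x a nonzero idempotent. If x ≤ k for some join-irreducible idempotent k, then x is join-irreducible (in the sense that x ≤ a ∨ b implies x ≤ a or x ≤ b). -/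
/-- A join-irreducible idempotent: a nonzero idempotent `e` such that
`e ≤ a ⊔ b` implies `e ≤ a` or `e ≤ b`. -/
def IsJIIdem {α : Type*} [MTL α] (e : α) : Prop :=
  e * e = e ∧ e ≠ ⊥ ∧ ∀ a b : α, e ≤ a ⊔ b → e ≤ a ∨ e ≤ b

/-- In a finite MTL-algebra, a nonzero idempotent lying below a join-irreducible
idempotent is itself join-irreducible. -/
theorem idem_below_ji_is_ji {α : Type*} [MTL α] [Fintype α]
    (x k : α) (hx : x * x = x) (hx0 : x ≠ ⊥) (hk : IsJIIdem k) (hxk : x ≤ k) :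
    ∀ a b : α, x ≤ a ⊔ b → x ≤ a ∨ x ≤ b := by
  intro a b hab
  have hres := fun (u v w : α) => MTL.residuation u v w
  have hmono : ∀ c d e : α, d ≤ e → c * d ≤ c * e := by
    intro c d e h
    have he : e ≤ MTL.himp c (c * e) := (hres e c (c * e)).1 (by rw [mul_comm])
    have := (hres d c (c * e)).2 (le_trans h he)
    rwa [mul_comm] at this
  have hle1 : ∀ c : α, c ≤ 1 := by
    intro c; rw [MTL.one_eq_top]; exact le_top
  have hmul_le : ∀ c d : α, c * d ≤ d := by
    intro c d
    have := hmono d c 1 (hle1 c)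
    rw [mul_one, mul_comm] at this
    exact this
  have hdist : x * (a ⊔ b) ≤ x * a ⊔ x * b := by
    have ha : a ≤ MTL.himp x (x * a ⊔ x * b) :=
      (hres a x _).1 (by rw [mul_comm]; exact le_sup_left)
    have hb : b ≤ MTL.himp x (x * a ⊔ x * b) :=
      (hres b x _).1 (by rw [mul_comm]; exact le_sup_right)
    have := (hres (a ⊔ b) x _).2 (sup_le ha hb)
    rwa [mul_comm] at this
  have hx2 : x ≤ x * a ⊔ x * b := by
    calc x = x * x := hx.symm
      _ ≤ x * (a ⊔ b) := hmono x x _ hab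
      _ ≤ x * a ⊔ x * b := hdist
  have hk3 := hk.2.2 (MTL.himp (x * a) (x * b)) (MTL.himp (x * b) (x * a))
    (by rw [MTL.prelinear, MTL.one_eq_top]; exact le_top)
  rcases hk3 with h | h
  · -- k * (x*a) ≤ x*b, hence x*a ≤ x*b
    have h1 : k * (x * a) ≤ x * b := (hres k (x * a) (x * b)).2 h
    have h2 : x * (x * a) ≤ k * (x * a) := by
      rw [mul_comm x (x * a), mul_comm k (x * a)]
      exact hmono (x * a) x k hxk
    have h3 : x * a ≤ x * b := by
      have := le_trans h2 h1
      rwa [← mul_assoc, hx] at this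
    right
    calc x ≤ x * a ⊔ x * b := hx2
      _ ≤ x * b := sup_le h3 le_rfl
      _ ≤ b := hmul_le x b
  · have h1 : k * (x * b) ≤ x * a := (hres k (x * b) (x * a)).2 h
    have h2 : x * (x * b) ≤ k * (x * b) := by
      rw [mul_comm x (x * b), mul_comm k (x * b)]
      exact hmono (x * b) x k hxk
    have h3 : x * b ≤ x * a := by
      have := le_trans h2 h1
      rwa [← mul_assoc, hx] at this
    left
    calc x ≤ x * a ⊔ x * b := hx2
      _ ≤ x * a := sup_le le_rfl h3
      _ ≤ a := hmul_le x a
end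

section
/- Let M be a finite MTL-algebra and e a join-irreducible idempotent. The quotient M/↑e is archimedean if and only if e is minimal among join-irreducible idempotents of M. -/
namespace MTLAux
variable {α : Type*} [MTL α]

lemma le_one' (a : α) : a ≤ 1 := MTL.one_eq_top (α := α) ▸ le_top

lemma mul_le_mul_right'' {a b : α} (h : a ≤ b) (c : α) : a * c ≤ b * c :=
  (MTL.residuation a c (b * c)).mpr
    (h.trans ((MTL.residuation b c (b * c)).mp le_rfl))

lemma mul_le_mul_left'' (a : α) {b c : α} (h : b ≤ c) : a * b ≤ a * c := by
  rw [mul_comm a b, mul_comm a c]; exact mul_le_mul_right'' h a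

lemma mul_le_left' (a b : α) : a * b ≤ a := by
  calc a * b ≤ a * 1 := mul_le_mul_left'' a (le_one' b)
  _ = a := mul_one a

lemma mul_le_right' (a b : α) : a * b ≤ b := by
  rw [mul_comm]; exact mul_le_left' b a

lemma mul_bot' (a : α) : a * (⊥ : α) = ⊥ := le_bot_iff.mp (mul_le_right' a ⊥)
lemma bot_mul' (a : α) : (⊥ : α) * a = ⊥ := le_bot_iff.mp (mul_le_left' ⊥ a)

lemma pow_anti (a : α) {m n : ℕ} (h : m ≤ n) : a ^ n ≤ a ^ m := by
  induction n with
  | zero => obtain rfl := Nat.le_zero.mp h; exact le_rfl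
  | succ n ih =>
    rcases Nat.lt_or_ge m (n + 1) with h' | h'
    · calc a ^ (n + 1) = a ^ n * a := pow_succ a n
      _ ≤ a ^ n := mul_le_left' _ _
      _ ≤ a ^ m := ih (Nat.lt_succ_iff.mp h')
    · obtain rfl : m = n + 1 := le_antisymm h h'
      exact le_rfl

lemma pow_mono' {a b : α} (h : a ≤ b) (n : ℕ) : a ^ n ≤ b ^ n := by
  induction n with
  | zero => rw [pow_zero, pow_zero]
  | succ n ih =>
    calc a ^ (n + 1) = a ^ n * a := pow_succ a n
    _ ≤ b ^ n * a := mul_le_mul_right'' ih a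
    _ ≤ b ^ n * b := mul_le_mul_left'' _ h
    _ = b ^ (n + 1) := (pow_succ b n).symm

lemma idem_pow {e : α} (he : e * e = e) : ∀ n, 1 ≤ n → e ^ n = e := by
  intro n hn
  induction n with
  | zero => omega
  | succ n ih =>
    rcases Nat.lt_or_ge n 1 with h | h
    · obtain rfl : n = 0 := by omega
      exact pow_one e
    · rw [pow_succ, ih h, he]

lemma sup_mul_le {ι : Type*} {s : Finset ι} {f : ι → α} {w z : α}
    (h : ∀ i ∈ s, f i * w ≤ z) : s.sup f * w ≤ z :=
  (MTL.residuation _ w z).mpr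
    (Finset.sup_le fun i hi => (MTL.residuation (f i) w z).mp (h i hi))

lemma mul_sup_le (a b c : α) : a * (b ⊔ c) ≤ a * b ⊔ a * c := by
  rw [mul_comm a (b ⊔ c)]
  refine (MTL.residuation _ a _).mpr (sup_le ?_ ?_)
  · exact (MTL.residuation b a _).mp (by rw [mul_comm]; exact le_sup_left)
  · exact (MTL.residuation c a _).mp (by rw [mul_comm]; exact le_sup_right)

lemma pow_sup_le_sup (u v : α) :
    ∀ n, (u ⊔ v) ^ n ≤ (Finset.range (n + 1)).sup (fun i => u ^ i * v ^ (n - i)) := by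
  intro n
  induction n with
  | zero =>
    simp
  | succ n ih =>
    rw [pow_succ]
    refine (mul_le_mul_right'' ih _).trans ?_
    apply sup_mul_le
    intro i hi
    have hin : i ≤ n := Nat.lt_succ_iff.mp (Finset.mem_range.mp hi)
    refine (mul_sup_le _ u v).trans (sup_le ?_ ?_)
    · have h1 : u ^ i * v ^ (n - i) * u = u ^ (i + 1) * v ^ ((n + 1) - (i + 1)) := by
        rw [Nat.succ_sub_succ, mul_right_comm, ← pow_succ]
      rw [h1]
      exact Finset.le_sup (s := Finset.range (n + 1 + 1)) (f := fun j => u ^ j * v ^ (n + 1 - j)) (b := i + 1) (Finset.mem_range.mpr (by omega))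
    · have h2 : u ^ i * v ^ (n - i) * v = u ^ i * v ^ ((n + 1) - i) := by
        rw [mul_assoc, ← pow_succ, Nat.succ_sub hin]
      rw [h2]
      exact Finset.le_sup (s := Finset.range (n + 1 + 1)) (f := fun j => u ^ j * v ^ (n + 1 - j)) (b := i) (Finset.mem_range.mpr (by omega))

lemma pow_sup_bot {u v : α} {m : ℕ} (hu : u ^ m = ⊥) (hv : v ^ m = ⊥) :
    (u ⊔ v) ^ (2 * m) = ⊥ := by
  refine le_bot_iff.mp ((pow_sup_le_sup u v (2 * m)).trans ?_)
  apply Finset.sup_le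
  intro i _
  rcases le_or_gt m i with h | h
  · have h1 : u ^ i ≤ ⊥ := hu ▸ pow_anti u h
    calc u ^ i * v ^ (2 * m - i) ≤ ⊥ * v ^ (2 * m - i) := mul_le_mul_right'' h1 _
    _ = ⊥ := bot_mul' _
  · have h2 : m ≤ 2 * m - i := by omega
    have h1 : v ^ (2 * m - i) ≤ ⊥ := hv ▸ pow_anti v h2
    calc u ^ i * v ^ (2 * m - i) ≤ u ^ i * ⊥ := mul_le_mul_left'' _ h1
    _ = ⊥ := mul_bot' _

lemma exists_idem_pow [Fintype α] (a : α) : ∃ N, 1 ≤ N ∧ a ^ N * a ^ N = a ^ N := by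
  obtain ⟨i, j, hij, heq⟩ : ∃ i j : ℕ, i < j ∧ a ^ i = a ^ j := by
    obtain ⟨i, j, hne, heq⟩ := Finite.exists_ne_map_eq_of_infinite (fun n : ℕ => a ^ n)
    rcases hne.lt_or_gt with h | h
    · exact ⟨i, j, h, heq⟩
    · exact ⟨j, i, h, heq.symm⟩
  set d := j - i with hd
  have hd1 : 1 ≤ d := by omega
  have hstep : ∀ n, i ≤ n → a ^ (n + d) = a ^ n := by
    intro n hn
    have e1 : a ^ (n + d) = a ^ (n - i) * a ^ (i + d) := by
      rw [← pow_add]; congr 1; omega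
    have e2 : i + d = j := by omega
    rw [e1, e2, ← heq, ← pow_add]
    congr 1; omega
  have hrep : ∀ c n, i ≤ n → a ^ (n + c * d) = a ^ n := by
    intro c
    induction c with
    | zero => intro n _; simp
    | succ c ih =>
      intro n hn
      have e1 : n + (c + 1) * d = (n + c * d) + d := by ring
      rw [e1, hstep _ (hn.trans (Nat.le_add_right _ _)), ih n hn]
  refine ⟨(i + 1) * d, Nat.mul_pos (Nat.succ_pos i) hd1, ?_⟩
  rw [← pow_add]
  exact hrep (i + 1) ((i + 1) * d)
    (by calc i ≤ i + 1 := Nat.le_succ i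
        _ = (i + 1) * 1 := (mul_one _).symm
        _ ≤ (i + 1) * d := Nat.mul_le_mul_left _ hd1)

lemma exists_ji_le [Fintype α] {f : α} (hf : f * f = f) (hfb : f ≠ ⊥) :
    ∃ k, IsJIIdem k ∧ k ≤ f := by
  classical
  let S : Finset α := Finset.univ.filter (fun g => g * g = g ∧ g ≠ ⊥ ∧ g ≤ f)
  have hfS : f ∈ S := by simp [S, hf, hfb]
  obtain ⟨k, hkS, hkmin⟩ := S.exists_minimal ⟨f, hfS⟩
  obtain ⟨hk1, hk2, hk3⟩ : k * k = k ∧ k ≠ ⊥ ∧ k ≤ f := by simpa [S] using hkS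
  have step : ∀ c : α, (∃ m, 1 ≤ m ∧ (k * c) ^ m = ⊥) ∨ k ≤ c := by
    intro c
    obtain ⟨N, hN1, hNidem⟩ := exists_idem_pow (k * c)
    by_cases hb : (k * c) ^ N = ⊥
    · exact Or.inl ⟨N, hN1, hb⟩
    · right
      have hkc : (k * c) ^ N ≤ k * c := by
        have := pow_anti (k * c) hN1
        rwa [pow_one] at this
      have hlek : (k * c) ^ N ≤ k := hkc.trans (mul_le_left' k c)
      have hmem : (k * c) ^ N ∈ S := by
        simp only [S, Finset.mem_filter]
        exact ⟨Finset.mem_univ _, hNidem, hb, hlek.trans hk3⟩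
      have heq : (k * c) ^ N = k := by
        rcases lt_or_eq_of_le hlek with h | h
        · exact absurd h (not_lt_of_ge (hkmin hmem hlek))
        · exact h
      calc k = (k * c) ^ N := heq.symm
      _ ≤ k * c := hkc
      _ ≤ c := mul_le_right' k c
  refine ⟨k, ⟨hk1, hk2, ?_⟩, hk3⟩
  intro a b hab
  rcases step a with ⟨m, hm1, hma⟩ | h
  · rcases step b with ⟨l, hl1, hlb⟩ | h'
    · exfalso
      set M := max m l with hM
      have hua : (k * a) ^ M = ⊥ :=
        le_bot_iff.mp (hma ▸ pow_anti (k * a) (le_max_left m l))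
      have hub : (k * b) ^ M = ⊥ :=
        le_bot_iff.mp (hlb ▸ pow_anti (k * b) (le_max_right m l))
      have hksup : k ≤ k * a ⊔ k * b := by
        calc k = k * k := hk1.symm
        _ ≤ k * (a ⊔ b) := mul_le_mul_left'' k hab
        _ ≤ k * a ⊔ k * b := mul_sup_le k a b
      have hle : k ≤ ⊥ := by
        calc k = k ^ (2 * M) := (idem_pow hk1 (2 * M) (by omega)).symm
        _ ≤ (k * a ⊔ k * b) ^ (2 * M) := pow_mono' hksup _
        _ = ⊥ := pow_sup_bot hua hub
      exact hk2 (le_bot_iff.mp hle)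
    · exact Or.inr h'
  · exact Or.inl h

end MTLAux

/-- For a join-irreducible idempotent `e` of a finite MTL-algebra, the quotient
`M/↑e` is archimedean iff `e` is minimal among join-irreducible idempotents.
The quotient chain is described via representatives: the class of `x` is below the
class of `y` iff `e * x ≤ y` (equivalently `e ≤ x → y`), the class of `y` equals
the class of `1` iff `e ≤ y`, and the class of `y ^ n` is below that of `x` iff
`e * y ^ n ≤ x`; so archimedeanity of `M/↑e` reads as the left-hand side below. -/
theorem quotient_archimedean_iff_minimal_ji {α : Type*} [MTL α] [Fintype α]
    (e : α) (he : IsJIIdem e) :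
    (∀ x y : α, e * x ≤ y → ¬ e ≤ y → ∃ n : ℕ, e * y ^ n ≤ x) ↔
      (∀ k : α, IsJIIdem k → k ≤ e → k = e) := by

  constructor
  · intro h k hk hke
    by_contra hne
    have henk : ¬ e ≤ k := fun hle => hne (le_antisymm hke hle)
    have hx : e * (⊥ : α) ≤ k := by rw [MTLAux.mul_bot']; exact bot_le
    obtain ⟨n, hn⟩ := h ⊥ k hx henk
    cases n with
    | zero =>
      rw [pow_zero, mul_one] at hn
      exact he.2.1 (le_bot_iff.mp hn)
    | succ n =>
      rw [MTLAux.idem_pow hk.1 (n + 1) (Nat.succ_le_succ (Nat.zero_le n))] at hn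
      have hkb : k ≤ ⊥ := by
        calc k = k * k := hk.1.symm
        _ ≤ e * k := MTLAux.mul_le_mul_right'' hke k
        _ ≤ ⊥ := hn
      exact hk.2.1 (le_bot_iff.mp hkb)
  · intro hmin x y _ hey
    obtain ⟨N, hN1, hNidem⟩ := MTLAux.exists_idem_pow (e * y)
    by_cases hb : (e * y) ^ N = ⊥
    · refine ⟨N, ?_⟩
      have h1 : e * y ^ N = (e * y) ^ N := by
        rw [mul_pow, MTLAux.idem_pow he.1 N hN1]
      rw [h1, hb]
      exact bot_le
    · exfalso
      obtain ⟨g, hg, hgle⟩ := MTLAux.exists_ji_le hNidem hb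
      have hpow : (e * y) ^ N ≤ e * y := by
        have := MTLAux.pow_anti (e * y) hN1
        rwa [pow_one] at this
      have hge : g ≤ e := hgle.trans (hpow.trans (MTLAux.mul_le_left' e y))
      have hgeq : g = e := hmin g hg hge
      apply hey
      calc e = g := hgeq.symm
      _ ≤ (e * y) ^ N := hgle
      _ ≤ e * y := hpow
      _ ≤ y := MTLAux.mul_le_right' e y
end

section
/- Let F be a forest and {M_i}_{i∈F} a family of nontrivial MTL-chains. The forest product ⨂_{i∈F} M_i is totally ordered if and only if F is totally ordered. -/
/-- A forest: a poset in which every principal downset is a chain. -/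
def IsForest (F : Type*) [PartialOrder F] : Prop :=
  ∀ a : F, IsChain (· ≤ ·) (Set.Iic a)

/-- Membership in the forest product `⨂_{i∈F} M i`: whenever `h i ≠ 0ᵢ`,
`h j = 1` for all `j < i`. -/
def InForestProd {F : Type*} [PartialOrder F] (M : F → Type*) [∀ i, MTL (M i)]
    (h : ∀ i, M i) : Prop :=
  ∀ i : F, h i ≠ ⊥ → ∀ j : F, j < i → h j = 1

/-- The forest product of nontrivial MTL-chains (with its pointwise order) is
totally ordered iff the index forest is totally ordered. -/
theorem forest_prod_chain_iff {F : Type*} [PartialOrder F] (hF : IsForest F)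
    (M : F → Type*) [∀ i, MTL (M i)]
    (htot : ∀ (i : F) (x y : M i), x ≤ y ∨ y ≤ x)
    (hnt : ∀ i : F, (⊥ : M i) ≠ 1) :
    (∀ h g : {h : ∀ i, M i // InForestProd M h}, h.1 ≤ g.1 ∨ g.1 ≤ h.1) ↔
      ∀ i j : F, i ≤ j ∨ j ≤ i := by
  classical
  have le_one : ∀ (k : F) (x : M k), x ≤ 1 := fun k x => by
    rw [MTL.one_eq_top]; exact le_top
  constructor
  · intro hprod i j
    by_contra hc
    push_neg at hc
    obtain ⟨hij, hji⟩ := hc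
    have mem : ∀ a : F, InForestProd M (fun k => if a ≤ k then (⊥ : M k) else 1) := by
      intro a k hk l hlk
      by_cases hak : a ≤ k
      · simp only [hak, if_true] at hk; exact absurd rfl hk
      · by_cases hal : a ≤ l
        · exact absurd (hal.trans hlk.le) hak
        · simp [hal]
    set e : F → {h : ∀ i, M i // InForestProd M h} :=
      fun a => ⟨fun k => if a ≤ k then (⊥ : M k) else 1, mem a⟩ with he
    rcases hprod (e i) (e j) with hle | hle
    · have := hle j
      simp only [he, le_refl j, if_true, if_neg hij] at this
      exact hnt j (le_antisymm bot_le this)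
    · have := hle i
      simp only [he, le_refl i, if_true, if_neg hji] at this
      exact hnt i (le_antisymm bot_le this)
  · intro hFtot h g
    by_contra hc
    push_neg at hc
    obtain ⟨h1, h2⟩ := hc
    simp only [Pi.le_def, not_forall] at h1 h2
    obtain ⟨i, hi⟩ := h1
    obtain ⟨j, hj⟩ := h2
    have hlt_i : g.1 i < h.1 i := by
      rcases htot i (h.1 i) (g.1 i) with hle | hle
      · exact absurd hle hi
      · exact lt_of_le_of_ne hle (fun e => hi (e ▸ le_refl _))
    have hlt_j : h.1 j < g.1 j := by
      rcases htot j (g.1 j) (h.1 j) with hle | hle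
      · exact absurd hle hj
      · exact lt_of_le_of_ne hle (fun e => hj (e ▸ le_refl _))
    have gi_ne_one : g.1 i ≠ 1 := fun e => hi (by rw [e]; exact le_one _ _)
    have hj_ne_one : h.1 j ≠ 1 := fun e => hj (by rw [e]; exact le_one _ _)
    have hi_ne_bot : h.1 i ≠ ⊥ := (bot_le.trans_lt hlt_i).ne'
    have gj_ne_bot : g.1 j ≠ ⊥ := (bot_le.trans_lt hlt_j).ne'
    rcases hFtot i j with hle | hle
    · rcases lt_or_eq_of_le hle with hlt | rfl
      · exact gi_ne_one (g.2 j gj_ne_bot i hlt)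
      · exact absurd hlt_j hlt_i.asymm
    · rcases lt_or_eq_of_le hle with hlt | rfl
      · exact hj_ne_one (h.2 i hi_ne_bot j hlt)
      · exact absurd hlt_j hlt_i.asymm
end

section
/- Let F be a forest, {M_i}_{i∈F} a family of MTL-chains, and S a proper downset of F. Then the set X_S = {h ∈ ⨂_{i∈F} M_i : h|_S ≡ 1} is a filter of the forest product, and it is isomorphic (as a semihoop, i.e., preserving ·, →, ∧, ∨, 1) to the forest product ⨂_{i∈Sᶜ} M_i over the complement forest. -/
open Classical in
/-- The residual of the forest product, computed pointwise:
`(h → g)(i) = h i →ᵢ g i` if `h j ≤ g j` for all `j < i`, and `0ᵢ` otherwise. -/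
noncomputable def pHimp {ι : Type*} [PartialOrder ι] (N : ι → Type*) [∀ i, MTL (N i)]
    (h g : ∀ i, N i) : ∀ i, N i :=
  fun i => if (∀ j : ι, j < i → h j ≤ g j) then MTL.himp (h i) (g i) else ⊥

open Classical in
/-- Extension of a function on `Sᶜ` to all of `F` by `1` on `S`. -/
noncomputable def extendByOne {F : Type*} (M : F → Type*) [∀ i, MTL (M i)] (S : Set F)
    (g : ∀ i : {i : F // i ∉ S}, M i.1) : ∀ i, M i :=
  fun i => if h : i ∈ S then 1 else g ⟨i, h⟩


lemma MTL.le_one' {α : Type*} [MTL α] (x : α) : x ≤ 1 := by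
  rw [MTL.one_eq_top]; exact le_top

lemma MTL.himp_one_one' {α : Type*} [MTL α] : MTL.himp (1:α) 1 = 1 := by
  refine le_antisymm (MTL.le_one' _) ?_
  exact (MTL.residuation 1 1 1).mp (by simp)

lemma MTL.mul_bot' {α : Type*} [MTL α] (x : α) : x * (⊥:α) = ⊥ := by
  have h1 : (1:α) ≤ MTL.himp ⊥ ⊥ := (MTL.residuation 1 ⊥ ⊥).mp (by simp)
  exact le_antisymm ((MTL.residuation x ⊥ ⊥).mpr ((MTL.le_one' x).trans h1)) bot_le

lemma MTL.bot_mul' {α : Type*} [MTL α] (x : α) : (⊥:α) * x = ⊥ := by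
  rw [mul_comm]; exact MTL.mul_bot' x

/-- For a proper downset `S` of a forest `F`, the set
`X_S = {h ∈ ⨂ M i | h ≡ 1 on S}` is a filter of the forest product, and
extension by `1` is a semihoop isomorphism (preserving `·`, `→`, `∧`, `∨`, `1`)
from the forest product over the complement `Sᶜ` onto `X_S`. -/
theorem filter_XS_iso_complement_forest_prod {F : Type*} [PartialOrder F]
    (hF : IsForest F) (M : F → Type*) [∀ i, MTL (M i)]
    (htot : ∀ (i : F) (x y : M i), x ≤ y ∨ y ≤ x)
    (S : Set F) (hS : IsLowerSet S) (hproper : S ≠ Set.univ) :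
    -- `X_S` is a filter of the forest product:
    ((1 : ∀ i, M i) ∈ {h : ∀ i, M i | InForestProd M h ∧ ∀ i ∈ S, h i = 1} ∧
     (∀ h ∈ {h : ∀ i, M i | InForestProd M h ∧ ∀ i ∈ S, h i = 1},
        ∀ g : ∀ i, M i, InForestProd M g → h ≤ g →
          g ∈ {h : ∀ i, M i | InForestProd M h ∧ ∀ i ∈ S, h i = 1}) ∧
     (∀ h ∈ {h : ∀ i, M i | InForestProd M h ∧ ∀ i ∈ S, h i = 1},
        ∀ g ∈ {h : ∀ i, M i | InForestProd M h ∧ ∀ i ∈ S, h i = 1},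
          h * g ∈ {h : ∀ i, M i | InForestProd M h ∧ ∀ i ∈ S, h i = 1})) ∧
    -- extension by `1` is a bijection from `⨂_{i∈Sᶜ} M i` onto `X_S`:
    Set.BijOn (extendByOne M S)
      {g : ∀ i : {i : F // i ∉ S}, M i.1 |
        InForestProd (fun i : {i : F // i ∉ S} => M i.1) g}
      {h : ∀ i, M i | InForestProd M h ∧ ∀ i ∈ S, h i = 1} ∧
    -- it preserves `·`, `∨`, `∧` and `1`:
    (∀ g g' : ∀ i : {i : F // i ∉ S}, M i.1,
      extendByOne M S (g * g') = extendByOne M S g * extendByOne M S g' ∧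
      extendByOne M S (g ⊔ g') = extendByOne M S g ⊔ extendByOne M S g' ∧
      extendByOne M S (g ⊓ g') = extendByOne M S g ⊓ extendByOne M S g') ∧
    extendByOne M S (1 : ∀ i : {i : F // i ∉ S}, M i.1) = 1 ∧
    -- it preserves the residual `→`:
    (∀ g g' : ∀ i : {i : F // i ∉ S}, M i.1,
      InForestProd (fun i : {i : F // i ∉ S} => M i.1) g →
      InForestProd (fun i : {i : F // i ∉ S} => M i.1) g' →
      extendByOne M S (pHimp (fun i : {i : F // i ∉ S} => M i.1) g g') =
        pHimp M (extendByOne M S g) (extendByOne M S g')) := by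
  classical
  refine ⟨⟨⟨fun i hi j hj => rfl, fun i _ => rfl⟩, ?_, ?_⟩, ⟨?_, ?_, ?_⟩, ?_, ?_, ?_⟩
  · -- upward closed
    rintro h ⟨hfp, hS1⟩ g hg hle
    refine ⟨hg, fun i hi => ?_⟩
    have := hle i
    rw [hS1 i hi] at this
    exact le_antisymm (MTL.le_one' _) this
  · -- closed under mul
    rintro h ⟨hfp, hS1⟩ g ⟨gfp, gS1⟩
    refine ⟨?_, fun i hi => by simp [hS1 i hi, gS1 i hi]⟩
    intro i hi j hj
    have hh : h i ≠ ⊥ := fun e => hi (by simp [Pi.mul_apply, e, MTL.bot_mul'])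
    have hg : g i ≠ ⊥ := fun e => hi (by simp [Pi.mul_apply, e, MTL.mul_bot'])
    simp [Pi.mul_apply, hfp i hh j hj, gfp i hg j hj]
  · -- MapsTo
    intro g hg
    refine ⟨?_, fun i hi => by simp [extendByOne, hi]⟩
    intro i hi j hj
    by_cases hjS : j ∈ S
    · simp [extendByOne, hjS]
    · have hiS : i ∉ S := fun h => hjS (hS hj.le h)
      have hne : g ⟨i, hiS⟩ ≠ ⊥ := by simpa [extendByOne, hiS] using hi
      have := hg ⟨i, hiS⟩ hne ⟨j, hjS⟩ (Subtype.mk_lt_mk.mpr hj)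
      simp [extendByOne, hjS, this]
  · -- InjOn
    intro g _ g' _ he
    funext i
    have := congrFun he i.1
    simpa [extendByOne, i.2] using this
  · -- SurjOn
    rintro h ⟨hfp, hS1⟩
    refine ⟨fun i => h i.1, ?_, ?_⟩
    · intro i hi j hj
      exact hfp i.1 hi j.1 (Subtype.mk_lt_mk.mp hj)
    · funext i
      by_cases hiS : i ∈ S
      · simp [extendByOne, hiS, hS1 i hiS]
      · simp [extendByOne, hiS]
  · -- preserves mul, sup, inf
    intro g g'
    refine ⟨?_, ?_, ?_⟩ <;> funext i <;> by_cases hiS : i ∈ S <;>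
      simp [extendByOne, hiS]
  · -- preserves 1
    funext i; by_cases hiS : i ∈ S <;> simp [extendByOne, hiS]
  · -- preserves residual
    intro g g' hg hg'
    funext i
    by_cases hiS : i ∈ S
    · have hcond : ∀ j : F, j < i →
          (if h : j ∈ S then (1 : M j) else g ⟨j, h⟩) ≤
          (if h : j ∈ S then (1 : M j) else g' ⟨j, h⟩) := by
        intro j hj
        simp [hS hj.le hiS]
      simp only [extendByOne, pHimp, dif_pos hiS]
      rw [if_pos hcond, MTL.himp_one_one']
    · have hfwd : (∀ j : {i : F // i ∉ S}, j < ⟨i, hiS⟩ → g j ≤ g' j) →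
          ∀ j : F, j < i →
          (if h : j ∈ S then (1 : M j) else g ⟨j, h⟩) ≤
          (if h : j ∈ S then (1 : M j) else g' ⟨j, h⟩) := by
        intro H j hj
        by_cases hjS : j ∈ S
        · simp [hjS]
        · simpa [hjS] using H ⟨j, hjS⟩ (Subtype.mk_lt_mk.mpr hj)
      have hbwd : (∀ j : F, j < i →
          (if h : j ∈ S then (1 : M j) else g ⟨j, h⟩) ≤
          (if h : j ∈ S then (1 : M j) else g' ⟨j, h⟩)) →
          ∀ j : {i : F // i ∉ S}, j < ⟨i, hiS⟩ → g j ≤ g' j := by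
        intro H j hj
        simpa [j.2] using H j.1 (Subtype.mk_lt_mk.mp hj)
      simp only [extendByOne, pHimp, dif_neg hiS]
      by_cases hc : ∀ j : {i : F // i ∉ S}, j < ⟨i, hiS⟩ → g j ≤ g' j
      · rw [if_pos hc, if_pos (hfwd hc)]
      · rw [if_neg hc, if_neg (fun h => hc (hbwd h))]
end

section
/- Let F be a finite forest and l a labeling of F by finite nontrivial archimedean MTL-chains. An element h of the forest product ⨂_{i∈F} l(i) is a nonzero join-irreducible idempotent if and only if h(i) ∈ {0_i, 1} for all i and h⁻¹(1) is a nonempty chain (equivalently, h⁻¹(1) = ↓i for some i ∈ F). -/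
lemma mtl_bot_mul {α : Type*} [MTL α] (x : α) : (⊥ : α) * x = ⊥ :=
  le_bot_iff.mp ((MTL.residuation ⊥ x ⊥).mpr bot_le)

lemma idem_cases {α : Type*} [MTL α] (harch : IsArchimedean α) (hnt : (⊥ : α) ≠ 1)
    (e : α) (he : e * e = e) : e = ⊥ ∨ e = 1 := by
  by_cases h1 : e = 1
  · exact Or.inr h1
  left
  have hlt : e < 1 := lt_of_le_of_ne (MTL.one_eq_top (α := α) ▸ le_top) h1
  obtain ⟨n, hn⟩ := harch ⊥ e bot_le hlt
  rcases n with _ | m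
  · rw [pow_zero] at hn
    exact absurd (le_antisymm hn bot_le).symm hnt
  · have hp : ∀ k, e ^ (k + 1) = e := by
      intro k
      induction k with
      | zero => rw [pow_one]
      | succ k ih => rw [pow_succ, ih, he]
    exact le_bot_iff.mp (hp m ▸ hn)

/-- In a forest product of finite nontrivial archimedean MTL-chains over a finite
forest, an element `h` of the product is a nonzero join-irreducible idempotent iff
`h i ∈ {0ᵢ, 1}` for all `i` and `h⁻¹(1)` is a nonempty chain. -/
theorem forest_prod_ji_idem_iff {F : Type*} [PartialOrder F] [Fintype F]
    (hF : IsForest F) (M : F → Type*) [∀ i, MTL (M i)] [∀ i, Fintype (M i)]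
    (htot : ∀ (i : F) (x y : M i), x ≤ y ∨ y ≤ x)
    (hnt : ∀ i : F, (⊥ : M i) ≠ 1)
    (harch : ∀ i : F, IsArchimedean (M i))
    (h : ∀ i, M i) (hmem : InForestProd M h) :
    (h * h = h ∧ h ≠ (⊥ : ∀ i, M i) ∧
      (∀ g f : ∀ i, M i, InForestProd M g → InForestProd M f →
        g * g = g → f * f = f → h = g ⊔ f → h = g ∨ h = f)) ↔
    ((∀ i : F, h i = ⊥ ∨ h i = 1) ∧
      {i : F | h i = 1}.Nonempty ∧ IsChain (· ≤ ·) {i : F | h i = 1}) := by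
  classical
  constructor
  · rintro ⟨hidem, hne, hji⟩
    have hcases : ∀ i, h i = ⊥ ∨ h i = 1 := fun i =>
      idem_cases (harch i) (hnt i) (h i) (congrFun hidem i)
    have hexists : {i : F | h i = 1}.Nonempty := by
      by_contra hc
      apply hne
      funext i
      rcases hcases i with h0 | h1
      · exact h0
      · exact absurd ⟨i, h1⟩ hc
    refine ⟨hcases, hexists, ?_⟩
    intro i hi j hj hne'
    by_contra hcomp
    push_neg at hcomp
    obtain ⟨hij, hji'⟩ := hcomp
    set g : ∀ k, M k := fun k => if i ≤ k then ⊥ else h k with hg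
    set f : ∀ k, M k := fun k => if j ≤ k then ⊥ else h k with hf
    have hgmem : InForestProd M g := by
      intro k hk j' hj'
      by_cases hik : i ≤ k
      · simp [hg, hik] at hk
      · have hhk : h k ≠ ⊥ := by simpa [hg, hik] using hk
        have hnij : ¬ i ≤ j' := fun hij' => hik (hij'.trans hj'.le)
        simp [hg, hnij, hmem k hhk j' hj']
    have hfmem : InForestProd M f := by
      intro k hk j' hj'
      by_cases hjk : j ≤ k
      · simp [hf, hjk] at hk
      · have hhk : h k ≠ ⊥ := by simpa [hf, hjk] using hk
        have hnjj : ¬ j ≤ j' := fun hjj' => hjk (hjj'.trans hj'.le)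
        simp [hf, hnjj, hmem k hhk j' hj']
    have hgid : g * g = g := by
      funext k
      show g k * g k = g k
      by_cases hik : i ≤ k
      · simp only [hg, if_pos hik]; exact mtl_bot_mul ⊥
      · simp only [hg, if_neg hik]; exact congrFun hidem k
    have hfid : f * f = f := by
      funext k
      show f k * f k = f k
      by_cases hjk : j ≤ k
      · simp only [hf, if_pos hjk]; exact mtl_bot_mul ⊥
      · simp only [hf, if_neg hjk]; exact congrFun hidem k
    have hsup : h = g ⊔ f := by
      funext k
      show h k = g k ⊔ f k
      by_cases hik : i ≤ k
      · have hjk : ¬ j ≤ k := by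
          intro hjk
          rcases hF k (show i ∈ Set.Iic k from hik) (show j ∈ Set.Iic k from hjk) hne'
            with h1 | h2
          · exact hij h1
          · exact hji' h2
        simp only [hg, hf, if_pos hik, if_neg hjk]
        exact (bot_sup_eq (h k)).symm
      · have hle : f k ≤ h k := by
          by_cases hjk : j ≤ k
          · simp [hf, hjk]
          · simp [hf, hjk]
        simp only [hg, if_neg hik]
        exact (sup_eq_left.mpr hle).symm
    rcases hji g f hgmem hfmem hgid hfid hsup with hgeq | hfeq
    · have h1 : h i = g i := congrFun hgeq i
      rw [hi] at h1
      simp only [hg, if_pos (le_refl i)] at h1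
      exact hnt i h1.symm
    · have h1 : h j = f j := congrFun hfeq j
      rw [hj] at h1
      simp only [hf, if_pos (le_refl j)] at h1
      exact hnt j h1.symm
  · rintro ⟨hcases, ⟨i0, hi0⟩, hchain⟩
    refine ⟨?_, ?_, ?_⟩
    · funext k
      show h k * h k = h k
      rcases hcases k with h0 | h1
      · rw [h0]; exact mtl_bot_mul ⊥
      · rw [h1, one_mul]
    · intro hb
      have h1 : h i0 = ⊥ := congrFun hb i0
      exact hnt i0 (h1.symm.trans hi0)
    · intro g f hgm hfm hgid hfid hsup
      obtain ⟨m, hm, hmax⟩ := Set.Finite.exists_maximalFor id {i : F | h i = 1}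
        (Set.toFinite _) ⟨i0, hi0⟩
      have hle : ∀ i, h i = 1 → i ≤ m := by
        intro i hi
        by_cases him : i = m
        · exact him ▸ le_refl m
        rcases hchain hi hm him with h1 | h2
        · exact h1
        · exact hmax hi h2
      have key : ∀ e : ∀ i, M i, InForestProd M e → (∀ k, e k ≤ h k) → e m = 1 → h = e := by
        intro e hem hle' hem1
        have hemne : e m ≠ ⊥ := by
          rw [hem1]; exact fun hb => hnt m hb.symm
        funext k
        rcases hcases k with h0 | h1
        · rw [h0]
          exact (le_bot_iff.mp (h0 ▸ hle' k)).symm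
        · rw [h1]
          rcases eq_or_lt_of_le (hle k h1) with heq | hlt
          · rw [heq]; exact hem1.symm
          · exact (hem m hemne k hlt).symm
      have hm1 : h m = 1 := hm
      have hgc := idem_cases (harch m) (hnt m) (g m) (congrFun hgid m)
      have hfc := idem_cases (harch m) (hnt m) (f m) (congrFun hfid m)
      have hsm : h m = g m ⊔ f m := congrFun hsup m
      have hgle : ∀ k, g k ≤ h k := fun k => by
        rw [hsup]; exact le_sup_left
      have hfle : ∀ k, f k ≤ h k := fun k => by
        rw [hsup]; exact le_sup_right
      rcases hgc with hg0 | hg1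
      · rcases hfc with hf0 | hf1
        · rw [hm1, hg0, hf0, sup_idem] at hsm
          exact absurd hsm.symm (hnt m)
        · exact Or.inr (key f hfm hfle hf1)
      · exact Or.inl (key g hgm hgle hg1)
end
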